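/- Let μ, ν, κ be cardinals with μ and ν infinite and let T be a set of finite-support points of A(μ)^κ with |T| ≤ ν. Then the closure of T in A(μ)^κ has weight at most μ·ν (i.e. at most max(μ, ν)). -/

import Mathlib

open Cardinal Set Function

universe u

noncomputable section

/-- The density of a topological space: least cardinality of a dense subset. -/
def tdensity (X : Type u) [TopologicalSpace X] : Cardinal.{u} :=
  sInf {c : Cardinal.{u} | ∃ s : Set X, Dense s ∧ #s = c}

/-- The weight of a topological space: least cardinality of a base. -/
def tweight (X : Type u) [TopologicalSpace X] : Cardinal.{u} :=
  sInf {c : Cardinal.{u} | ∃ B : Set (Set X), TopologicalSpace.IsTopologicalBasis B ∧ #B = c}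

/-- The π-weight: least cardinality of a π-base. -/
def piWeight (X : Type u) [TopologicalSpace X] : Cardinal.{u} :=
  sInf {c : Cardinal.{u} | ∃ B : Set (Set X),
    (∀ U ∈ B, IsOpen U ∧ U.Nonempty) ∧
    (∀ V : Set X, IsOpen V → V.Nonempty → ∃ U ∈ B, U ⊆ V) ∧ #B = c}

/-- ĉ(X): the least cardinal κ such that X has no pairwise disjoint family of κ
nonempty open sets. -/
def hatCell (X : Type u) [TopologicalSpace X] : Cardinal.{u} :=
  sInf {c : Cardinal.{u} | ¬ ∃ 𝒰 : Set (Set X),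
    (∀ U ∈ 𝒰, IsOpen U ∧ U.Nonempty) ∧ 𝒰.PairwiseDisjoint id ∧ #𝒰 = c}

/-- `H` is a closed G_λ set: closed and the intersection of at most λ open sets. -/
def IsClosedGLambda (lam : Cardinal.{u}) {X : Type u} [TopologicalSpace X] (H : Set X) : Prop :=
  IsClosed H ∧ ∃ 𝒰 : Set (Set X), (∀ U ∈ 𝒰, IsOpen U) ∧ #𝒰 ≤ lam ∧ H = ⋂₀ 𝒰

/-- X ∈ Γ(λ): every closed G_λ set has density ≤ λ. -/
def InGamma (lam : Cardinal.{u}) (X : Type u) [TopologicalSpace X] : Prop :=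
  ∀ H : Set X, IsClosedGLambda lam H → tdensity ↥H ≤ lam

/-- `S` witnesses `X ∈ Δ(λ)`. -/
def DeltaWitness (lam : Cardinal.{u}) (X : Type u) [TopologicalSpace X] (S : Set X) : Prop :=
  Dense S ∧
  (∀ T : Set X, T ⊆ S → #T < lam → tweight ↥(closure T) < lam) ∧
  (∀ (Y : Type u) (_ : TopologicalSpace Y), T2Space Y → ∀ f : X → Y,
     Continuous f → Surjective f → tweight Y = lam → #(f '' S) = lam)

/-- X ∈ Δ(λ). -/
def InDelta (lam : Cardinal.{u}) (X : Type u) [TopologicalSpace X] : Prop :=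
  lam ≤ tweight X ∧ ∃ S : Set X, DeltaWitness lam X S

/-- A canonical discrete space of cardinality `c`. -/
instance (c : Cardinal.{u}) : TopologicalSpace c.out := ⊥

instance (c : Cardinal.{u}) : DiscreteTopology c.out := ⟨rfl⟩

/-- A(μ): one-point compactification of a discrete space of cardinality μ. -/
def ACompact (μ : Cardinal.{u}) : Type u := OnePoint μ.out

instance (μ : Cardinal.{u}) : TopologicalSpace (ACompact μ) :=
  inferInstanceAs (TopologicalSpace (OnePoint μ.out))

/-- A(μ)^κ. -/
def APow (μ κ : Cardinal.{u}) : Type u := κ.out → ACompact μ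

instance (μ κ : Cardinal.{u}) : TopologicalSpace (APow μ κ) :=
  inferInstanceAs (TopologicalSpace (κ.out → ACompact μ))

/-- The set of finite-support points of A(μ)^κ. -/
def finSupport (μ κ : Cardinal.{u}) : Set (APow μ κ) :=
  {x | {ξ | x ξ ≠ (OnePoint.infty : OnePoint μ.out)}.Finite}

/-- X is polyadic: a continuous image of some A(μ)^κ. -/
def IsPolyadic (X : Type u) [TopologicalSpace X] : Prop :=
  ∃ μ κ : Cardinal.{u}, ℵ₀ ≤ μ ∧ ∃ f : APow μ κ → X, Continuous f ∧ Surjective f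

/-!
Every point of `T`, hence of its closure, equals `∞` outside the union `S` of the supports,
and `|S| ≤ ν`. Restriction to `S` therefore embeds `closure T` into `A(μ)^S`, and the finite
cylinders over a base of `A(μ)` of size `μ` form a base of `A(μ)^S` of size at most `μ · |S|`.
-/

open TopologicalSpace Topology

lemma tweight_le_mk_of_isTopologicalBasis {X : Type u} [TopologicalSpace X] {B : Set (Set X)}
    (hB : IsTopologicalBasis B) : tweight X ≤ #B :=
  csInf_le' ⟨B, hB, rfl⟩

lemma exists_isTopologicalBasis_mk_eq_tweight (X : Type u) [TopologicalSpace X] :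
    ∃ B : Set (Set X), IsTopologicalBasis B ∧ #B = tweight X :=
  csInf_mem (s := {c : Cardinal.{u} | ∃ B : Set (Set X), IsTopologicalBasis B ∧ #B = c})
    ⟨_, _, isTopologicalBasis_opens, rfl⟩

lemma tweight_le_of_isInducing {X Y : Type u} [TopologicalSpace X] [TopologicalSpace Y]
    {f : X → Y} (hf : IsInducing f) : tweight X ≤ tweight Y := by
  obtain ⟨B, hB, hBcard⟩ := exists_isTopologicalBasis_mk_eq_tweight Y
  calc tweight X ≤ #(preimage f '' B) := tweight_le_mk_of_isTopologicalBasis (hB.isInducing hf)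
    _ ≤ tweight Y := mk_image_le.trans hBcard.le

def onePointBasis (α : Type u) : α ⊕ Finset α → Set (OnePoint α) :=
  Sum.elim (fun a => {(a : OnePoint α)}) (fun F => ((↑) '' (F : Set α))ᶜ)

lemma isTopologicalBasis_range_onePointBasis (α : Type u) [TopologicalSpace α]
    [DiscreteTopology α] : IsTopologicalBasis (range (onePointBasis α)) := by
  refine isTopologicalBasis_of_isOpen_of_nhds ?_ ?_
  · rintro _ ⟨a | F, rfl⟩
    · simpa [onePointBasis] using OnePoint.isOpen_image_coe.2 (isOpen_discrete {a})
    · exact OnePoint.isOpen_compl_image_coe.2 ⟨isClosed_discrete _, F.finite_toSet.isCompact⟩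
  · intro p U hpU hU
    cases p with
    | infty =>
      have hfin : ((↑) ⁻¹' U : Set α)ᶜ.Finite :=
        ((OnePoint.isOpen_iff_of_mem' hpU).1 hU).1.finite_of_discrete
      refine ⟨_, ⟨Sum.inr hfin.toFinset, rfl⟩, by simp [onePointBasis], ?_⟩
      rintro (_ | a) ha
      · exact hpU
      · by_contra haU
        exact ha ⟨a, by rw [Finite.coe_toFinset]; exact haU, rfl⟩
    | coe a => exact ⟨_, ⟨Sum.inl a, rfl⟩, rfl, by simpa [onePointBasis] using hpU⟩

lemma mk_sum_finset_of_infinite (α : Type u) [Infinite α] : #(α ⊕ Finset α) = #α := by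
  rw [mk_sum, mk_finset_of_infinite, lift_id, add_eq_self (aleph0_le_mk α)]

def cylinder {ι X β : Type u} (b : β → Set X) (p : Σ F : Finset ι, F → β) : Set (ι → X) :=
  {x | ∀ i : p.1, x i ∈ b (p.2 i)}

lemma isTopologicalBasis_range_cylinder {ι X β : Type u} [TopologicalSpace X] {b : β → Set X}
    (hb : IsTopologicalBasis (range b)) :
    IsTopologicalBasis (range (cylinder (ι := ι) b)) := by
  refine (isTopologicalBasis_pi fun _ => hb).of_isOpen_of_subset ?_ ?_
  · rintro _ ⟨⟨F, g⟩, rfl⟩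
    have : cylinder b ⟨F, g⟩ = ⋂ i : F, (fun x : ι → X => x i) ⁻¹' b (g i) := by
      ext x; simp [cylinder]
    rw [this]
    exact isOpen_iInter_of_finite fun i =>
      (hb.isOpen ⟨g i, rfl⟩).preimage (continuous_apply (i : ι))
  · rintro _ ⟨U, F, hU, rfl⟩
    choose g hg using fun i : F => hU i i.2
    refine ⟨⟨F, g⟩, ?_⟩
    ext x
    simp [cylinder, hg]

lemma mk_sigma_finset_arrow_le (ι β : Type u) (hβ : ℵ₀ ≤ #β) :
    #(Σ F : Finset ι, F → β) ≤ max #ι #β := by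
  classical
  have hfinset : #(Finset ι) ≤ max ℵ₀ #ι :=
    (mk_le_of_surjective List.toFinset_surjective).trans (mk_list_le_max ι)
  calc #(Σ F : Finset ι, F → β) = sum fun F : Finset ι => #β ^ #F := by
        simp only [mk_sigma, power_def]
    _ ≤ sum fun _ : Finset ι => #β :=
        sum_le_sum _ _ fun F => by rw [mk_coe_finset]; exact power_nat_le hβ
    _ = #(Finset ι) * #β := sum_const' _ _
    _ ≤ max #ι #β * max #ι #β := by
        gcongr
        · exact hfinset.trans (max_le (hβ.trans (le_max_right _ _)) (le_max_left _ _))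
        · exact le_max_right _ _
    _ = max #ι #β := mul_eq_self (hβ.trans (le_max_right _ _))

lemma tweight_pi_le_of_isTopologicalBasis (ι : Type u) {X β : Type u} [TopologicalSpace X]
    {b : β → Set X} (hb : IsTopologicalBasis (range b)) (hβ : ℵ₀ ≤ #β) :
    tweight (ι → X) ≤ max #ι #β :=
  calc tweight (ι → X) ≤ #(range (cylinder (ι := ι) b)) :=
        tweight_le_mk_of_isTopologicalBasis (isTopologicalBasis_range_cylinder hb)
    _ ≤ max #ι #β := mk_range_le.trans (mk_sigma_finset_arrow_le ι β hβ)

lemma isInducing_restrict_of_subset_pi_compl {ι X : Type u} [TopologicalSpace X]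
    {Y : Set (ι → X)} {S : Set ι} {c : ι → X} (hY : Y ⊆ Sᶜ.pi fun i => {c i}) :
    IsInducing fun (y : Y) (i : S) => (y : ι → X) i := by
  classical
  -- filling in `c` off `S` recovers the inclusion of `Y`
  let fill : (S → X) → ι → X := fun f i => if h : i ∈ S then f ⟨i, h⟩ else c i
  have hfill : Continuous fill := continuous_pi fun i => by
    by_cases h : i ∈ S
    · simpa [fill, h] using continuous_apply (⟨i, h⟩ : S)
    · simpa [fill, h] using continuous_const
  have hrestrict : Continuous fun (y : Y) (i : S) => (y : ι → X) i :=
    continuous_pi fun i => (continuous_apply (i : ι)).comp continuous_subtype_val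
  refine IsInducing.of_comp hrestrict hfill ?_
  convert IsInducing.subtypeVal (t := Y) using 1
  ext y i
  by_cases h : i ∈ S
  · simp [fill, h]
  · simpa [fill, h, eq_comm] using hY y.2 i h

lemma mk_setOf_exists_ne_le {ι Y : Type u} {T : Set (ι → Y)} {c : Y} {ν : Cardinal.{u}}
    (hT : ∀ t ∈ T, {i | t i ≠ c}.Finite) (hTcard : #T ≤ ν) (hν : ℵ₀ ≤ ν) :
    #{i | ∃ t ∈ T, t i ≠ c} ≤ ν := by
  have hunion : {i | ∃ t ∈ T, t i ≠ c} = ⋃ t ∈ T, {i | t i ≠ c} := by ext; simp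
  rw [hunion]
  calc #(⋃ t ∈ T, {i | t i ≠ c}) ≤ #T * ⨆ t : T, #{i | (t : ι → Y) i ≠ c} :=
        mk_biUnion_le _ _
    _ ≤ ν * ν := mul_le_mul' hTcard (ciSup_le' fun t => (hT t t.2).lt_aleph0.le.trans hν)
    _ = ν := mul_eq_self hν

/-- closures of small sets of finite-support points have small weight. -/
theorem statement11 (μ ν κ : Cardinal.{u}) (hμ : ℵ₀ ≤ μ) (hν : ℵ₀ ≤ ν)
    (T : Set (APow μ κ)) (hT : T ⊆ finSupport μ κ) (hTcard : #T ≤ ν) :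
    tweight ↥(closure T) ≤ max μ ν := by
  set S : Set κ.out := {ξ | ∃ t ∈ T, t ξ ≠ OnePoint.infty}
  have hS : #S ≤ ν := mk_setOf_exists_ne_le (fun t ht => hT ht) hTcard hν
  have hTS : T ⊆ Sᶜ.pi fun _ => {OnePoint.infty} :=
    fun t ht ξ hξ => not_not.1 fun h => hξ ⟨t, ht, h⟩
  have hclosure : closure T ⊆ Sᶜ.pi fun _ => {OnePoint.infty} :=
    closure_minimal hTS (isClosed_set_pi fun _ _ => isClosed_singleton (X := OnePoint μ.out))
  have : Infinite μ.out := infinite_iff.2 (by rwa [mk_out])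
  calc tweight ↥(closure T) ≤ tweight (S → ACompact μ) :=
        tweight_le_of_isInducing (isInducing_restrict_of_subset_pi_compl hclosure)
    _ ≤ max #S #(μ.out ⊕ Finset μ.out) :=
        tweight_pi_le_of_isTopologicalBasis S (isTopologicalBasis_range_onePointBasis μ.out)
          (by rw [mk_sum_finset_of_infinite, mk_out]; exact hμ)
    _ ≤ max μ ν := by
        rw [mk_sum_finset_of_infinite, mk_out, max_comm μ]
        exact max_le_max hS le_rfl
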